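/- arXiv:2404.06658 — 2 statements merged into one kernel-verified Lean document; each statement's English description precedes it below -/
import Mathlib

section
/- Let M be a symmetric m×m real matrix (m ≥ 2) with zero diagonal and strictly positive off-diagonal entries. If there is no nonzero vector ξ with coordinates summing to zero satisfying ⟨M ξ, ξ⟩ = 0, then ⟨M ξ, ξ⟩ < 0 for every nonzero vector ξ with coordinates summing to zero. -/
theorem stmt_2 {m : ℕ} (hm : 2 ≤ m) (M : Matrix (Fin m) (Fin m) ℝ)
    (hsymm : M.IsSymm) (hdiag : ∀ i, M i i = 0)
    (hpos : ∀ i j, i ≠ j → 0 < M i j)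
    (h : ¬∃ ξ : Fin m → ℝ, ξ ≠ 0 ∧ (∑ i, ξ i) = 0 ∧
      (∑ i, ∑ j, M i j * ξ i * ξ j) = 0) :
    ∀ ξ : Fin m → ℝ, ξ ≠ 0 → (∑ i, ξ i) = 0 →
      (∑ i, ∑ j, M i j * ξ i * ξ j) < 0 := by
  intro η hη hηsum
  have key : ∀ ξ : Fin m → ℝ, ξ ≠ 0 → (∑ i, ξ i) = 0 →
      (∑ i, ∑ j, M i j * ξ i * ξ j) ≠ 0 := by
    intro ξ h1 h2 h3; exact h ⟨ξ, h1, h2, h3⟩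
  set a : Fin m := ⟨0, by omega⟩ with ha
  set b : Fin m := ⟨1, by omega⟩ with hb
  have hab : a ≠ b := by simp [ha, hb, Fin.ext_iff]
  set ξ0 : Fin m → ℝ := fun i => (if i = a then (1:ℝ) else 0) + (if i = b then (-1:ℝ) else 0) with hξ0def
  have hξ0a : ξ0 a = 1 := by simp [hξ0def, hab]
  have hξ0ne : ξ0 ≠ 0 := by
    intro hc
    have := congrFun hc a
    rw [hξ0a] at this
    simp at this
  have hξ0sum : ∑ i, ξ0 i = 0 := by
    simp [hξ0def, Finset.sum_add_distrib]
  have hQξ0 : (∑ i, ∑ j, M i j * ξ0 i * ξ0 j) = -(M a b + M b a) := by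
    simp [hξ0def, mul_add, add_mul, Finset.sum_add_distrib, mul_ite, ite_mul,
      Finset.sum_ite_eq', hab, hab.symm, hdiag]
  have hQξ0neg : (∑ i, ∑ j, M i j * ξ0 i * ξ0 j) < 0 := by
    rw [hQξ0]
    have := hpos a b hab
    have := hpos b a hab.symm
    linarith
  -- scaling lemma
  have hscale : ∀ (c : ℝ) (ξ : Fin m → ℝ),
      (∑ i, ∑ j, M i j * (c * ξ i) * (c * ξ j)) = c^2 * ∑ i, ∑ j, M i j * ξ i * ξ j := by
    intro c ξ
    rw [Finset.mul_sum]
    refine Finset.sum_congr rfl fun i _ => ?_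
    rw [Finset.mul_sum]
    refine Finset.sum_congr rfl fun j _ => ?_
    ring
  rcases lt_trichotomy (∑ i, ∑ j, M i j * η i * η j) 0 with hlt | heq | hgt
  · exact hlt
  · exact absurd heq (key η hη hηsum)
  · exfalso
    set f : ℝ → ℝ := fun t => ∑ i, ∑ j, M i j * ((1-t)*ξ0 i + t*η i) * ((1-t)*ξ0 j + t*η j) with hf
    have hfc : Continuous f := by
      apply continuous_finset_sum
      intro i _
      apply continuous_finset_sum
      intro j _
      fun_prop
    have hf0 : f 0 = ∑ i, ∑ j, M i j * ξ0 i * ξ0 j := by simp [hf]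
    have hf1 : f 1 = ∑ i, ∑ j, M i j * η i * η j := by simp [hf]
    have hmem : (0:ℝ) ∈ Set.Icc (f 0) (f 1) := by
      constructor
      · rw [hf0]; linarith
      · rw [hf1]; linarith
    obtain ⟨t, ht01, hft⟩ := intermediate_value_Icc (by norm_num : (0:ℝ) ≤ 1) hfc.continuousOn hmem
    set ζ : Fin m → ℝ := fun i => (1-t)*ξ0 i + t*η i with hζ
    have hζsum : ∑ i, ζ i = 0 := by
      simp only [hζ]
      rw [Finset.sum_add_distrib, ← Finset.mul_sum, ← Finset.mul_sum, hξ0sum, hηsum]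
      ring
    by_cases hζ0 : ζ = 0
    · -- degenerate: η is a multiple of ξ0
      have ht0 : t ≠ 0 := by
        intro ht
        have := congrFun hζ0 a
        simp [hζ, ht, hξ0a] at this
      have hηc : η = fun i => ((t-1)/t) * ξ0 i := by
        funext i
        have := congrFun hζ0 i
        simp only [hζ, Pi.zero_apply] at this
        field_simp
        linarith
      have : (∑ i, ∑ j, M i j * η i * η j) = ((t-1)/t)^2 * ∑ i, ∑ j, M i j * ξ0 i * ξ0 j := by
        rw [hηc]; exact hscale _ _
      nlinarith [sq_nonneg ((t-1)/t)]
    · exact key ζ hζ0 hζsum hft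
end

section
/- Let X = {x_1, ..., x_m} be a finite metric space, m ≥ 2, and p ≥ 0. If X is not of p-negative type, then X admits a nontrivial p-polygonal equality, i.e. there exists a nonzero ξ ∈ F_0 with ⟨D_p ξ, ξ⟩ = 0. -/
noncomputable def qform {X : Type*} [MetricSpace X] {m : ℕ} (x : Fin m → X) (p : ℝ)
    (ξ : Fin m → ℝ) : ℝ :=
  ∑ i, ∑ j, dist (x i) (x j) ^ p * ξ i * ξ j

lemma qform_smul {X : Type*} [MetricSpace X] {m : ℕ} (x : Fin m → X) (p : ℝ)
    (c : ℝ) (ξ : Fin m → ℝ) : qform x p (fun i => c * ξ i) = c ^ 2 * qform x p ξ := by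
  unfold qform
  rw [Finset.mul_sum]
  refine Finset.sum_congr rfl fun i _ => ?_
  rw [Finset.mul_sum]
  exact Finset.sum_congr rfl fun j _ => by ring

lemma sum_mul_zeta {m : ℕ} {a b : Fin m} (hab : a ≠ b) (f : Fin m → ℝ) :
    ∑ j, f j * (if j = a then (1:ℝ) else if j = b then -1 else 0) = f a - f b := by
  have key : ∀ j : Fin m, f j * (if j = a then (1:ℝ) else if j = b then -1 else 0)
      = (if j = a then f a else 0) + (if j = b then -f b else 0) := by
    intro j
    by_cases hj0 : j = a
    · subst hj0; simp [hab]
    · by_cases hj1 : j = b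
      · subst hj1; simp [hj0]
      · simp [hj0, hj1]
  rw [Finset.sum_congr rfl fun j _ => key j, Finset.sum_add_distrib]
  simp [sub_eq_add_neg]

theorem stmt_15 {X : Type*} [MetricSpace X] {m : ℕ} (hm : 2 ≤ m)
    (x : Fin m → X) (hx : Function.Injective x) (p : ℝ) (hp : 0 ≤ p)
    (h : ¬∀ ξ : Fin m → ℝ, (∑ i, ξ i) = 0 → qform x p ξ ≤ 0) :
    ∃ ξ : Fin m → ℝ, ξ ≠ 0 ∧ (∑ i, ξ i) = 0 ∧ qform x p ξ = 0 := by
  push_neg at h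
  obtain ⟨η, hηsum, hηpos⟩ := h
  rcases eq_or_lt_of_le hp with hp0 | hp0
  · exfalso
    have : qform x p η = 0 := by
      unfold qform
      simp only [← hp0, Real.rpow_zero, one_mul]
      rw [← Finset.sum_mul_sum]
      simp [hηsum]
    linarith
  set a : Fin m := ⟨0, by omega⟩ with ha
  set b : Fin m := ⟨1, by omega⟩ with hb
  have hab : a ≠ b := by simp [ha, hb, Fin.ext_iff]
  set ζ : Fin m → ℝ := fun i => if i = a then (1:ℝ) else if i = b then -1 else 0 with hζ
  have hζsum : (∑ i, ζ i) = 0 := by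
    have := sum_mul_zeta hab (fun _ => (1:ℝ))
    simpa [hζ] using this
  have hζq : qform x p ζ = -(2 * dist (x a) (x b) ^ p) := by
    unfold qform
    have inner : ∀ i : Fin m, (∑ j, dist (x i) (x j) ^ p * ζ i * ζ j)
        = (dist (x i) (x a) ^ p * ζ i - dist (x i) (x b) ^ p * ζ i) := by
      intro i
      exact sum_mul_zeta hab (fun j => dist (x i) (x j) ^ p * ζ i)
    rw [Finset.sum_congr rfl fun i _ => inner i, Finset.sum_sub_distrib]
    have e1 : ∀ i : Fin m, dist (x i) (x a) ^ p * ζ i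
        = (fun i => dist (x i) (x a) ^ p) i * ζ i := fun i => rfl
    rw [sum_mul_zeta hab (fun i => dist (x i) (x a) ^ p),
        sum_mul_zeta hab (fun i => dist (x i) (x b) ^ p)]
    rw [dist_self, dist_self, Real.zero_rpow (ne_of_gt hp0), dist_comm (x b) (x a)]
    ring
  have hdpos : (0:ℝ) < dist (x a) (x b) ^ p :=
    Real.rpow_pos_of_pos (dist_pos.mpr fun e => hab (hx e)) p
  have hζneg : qform x p ζ < 0 := by rw [hζq]; linarith
  set f : ℝ → ℝ := fun t => qform x p (fun i => (1 - t) * ζ i + t * η i) with hf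
  have hcont : Continuous f := by
    unfold f
    unfold qform
    fun_prop
  have hf0 : f 0 = qform x p ζ := by simp [hf]
  have hf1 : f 1 = qform x p η := by simp [hf]
  have hmem : (0:ℝ) ∈ Set.Icc (f 0) (f 1) := by
    rw [hf0, hf1]; exact ⟨le_of_lt hζneg, le_of_lt hηpos⟩
  obtain ⟨t, ht, hft⟩ := intermediate_value_Icc (by norm_num : (0:ℝ) ≤ 1)
    hcont.continuousOn hmem
  refine ⟨fun i => (1 - t) * ζ i + t * η i, ?_, ?_, hft⟩
  · intro hzero
    have hz : ∀ i, (1 - t) * ζ i + t * η i = 0 := fun i => congrFun hzero i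
    by_cases ht0 : t = 0
    · have := hz a
      simp [ht0, hζ] at this
    · have hη : ∀ i, η i = ((t - 1) / t) * ζ i := by
        intro i
        have := hz i
        field_simp
        linarith [hz i]
      have : qform x p η = ((t - 1) / t) ^ 2 * qform x p ζ := by
        rw [show η = fun i => ((t - 1) / t) * ζ i from funext hη]
        exact qform_smul x p _ ζ
      nlinarith [sq_nonneg ((t - 1) / t)]
  · rw [Finset.sum_add_distrib, ← Finset.mul_sum, ← Finset.mul_sum, hζsum, hηsum]
    ring
end
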